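/- Let p, p_min, δ be real numbers with 0 < p_min ≤ p ≤ 1 and 0 < δ ≤ 1, and let t be an integer satisfying t ≥ -(1/2)·log₂(δ·p_min) - 1/2. Set φ = 2·arcsin(√p). Then the quantity P = sin²(2^t·φ) / (2^{2t+1}·sin²(φ/2)) satisfies P ≤ δ. -/
import Mathlib


theorem stmt_5 (p pmin δ : ℝ) (h1 : 0 < pmin) (h2 : pmin ≤ p) (h3 : p ≤ 1)
    (h4 : 0 < δ) (h5 : δ ≤ 1) (t : ℤ)
    (ht : (t : ℝ) ≥ -(1 / 2) * Real.logb 2 (δ * pmin) - 1 / 2) :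
    Real.sin ((2 : ℝ) ^ t * (2 * Real.arcsin (Real.sqrt p))) ^ 2 /
        ((2 : ℝ) ^ (2 * t + 1) * Real.sin ((2 * Real.arcsin (Real.sqrt p)) / 2) ^ 2) ≤ δ := by
  have hp : 0 < p := lt_of_lt_of_le h1 h2
  have hsin : Real.sin ((2 * Real.arcsin (Real.sqrt p)) / 2) = Real.sqrt p := by
    rw [show (2 * Real.arcsin (Real.sqrt p)) / 2 = Real.arcsin (Real.sqrt p) by ring]
    exact Real.sin_arcsin (le_trans (by norm_num) (Real.sqrt_nonneg p))
      (Real.sqrt_le_one.mpr h3)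
  have hsq : Real.sin ((2 * Real.arcsin (Real.sqrt p)) / 2) ^ 2 = p := by
    rw [hsin, Real.sq_sqrt hp.le]
  rw [hsq]
  have hpow : (0 : ℝ) < (2 : ℝ) ^ (2 * t + 1) := zpow_pos (by norm_num) _
  -- key: 1 / (δ * pmin) ≤ 2 ^ (2t+1)
  have hkey : 1 / (δ * pmin) ≤ (2 : ℝ) ^ (2 * t + 1) := by
    have hdp : 0 < δ * pmin := mul_pos h4 h1
    have h1dp : 0 < 1 / (δ * pmin) := by positivity
    have hlog : Real.logb 2 (1 / (δ * pmin)) ≤ ((2 * t + 1 : ℤ) : ℝ) := by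
      rw [one_div, Real.logb_inv]
      push_cast
      linarith
    calc 1 / (δ * pmin) = (2 : ℝ) ^ (Real.logb 2 (1 / (δ * pmin))) := by
          rw [Real.rpow_logb (by norm_num) (by norm_num) h1dp]
      _ ≤ (2 : ℝ) ^ (((2 * t + 1 : ℤ) : ℝ)) :=
          Real.rpow_le_rpow_left_iff (by norm_num : (1:ℝ) < 2) |>.mpr hlog
      _ = (2 : ℝ) ^ (2 * t + 1) := by rw [Real.rpow_intCast]
  have hnum : Real.sin ((2 : ℝ) ^ t * (2 * Real.arcsin (Real.sqrt p))) ^ 2 ≤ 1 := by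
    have := Real.neg_one_le_sin ((2 : ℝ) ^ t * (2 * Real.arcsin (Real.sqrt p)))
    have := Real.sin_le_one ((2 : ℝ) ^ t * (2 * Real.arcsin (Real.sqrt p)))
    nlinarith
  have hden : 0 < (2 : ℝ) ^ (2 * t + 1) * p := mul_pos hpow hp
  rw [div_le_iff₀ hden]
  have h2 : 1 / (δ * pmin) ≤ (2 : ℝ) ^ (2 * t + 1) := hkey
  have : 1 ≤ δ * ((2 : ℝ) ^ (2 * t + 1) * pmin) := by
    rw [div_le_iff₀ (by positivity)] at hkey
    nlinarith
  nlinarith [mul_pos hpow h1]
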